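/- arXiv:1706.09320 — 2 statements merged into one kernel-verified Lean document; each statement's English description precedes it below -/
import Mathlib

section
/- Let p be a prime, P ∈ ℤ[x₁,…,x_d] a polynomial, and α ∈ ℤ^d with P(α) ≡ 0 (mod p^k). Suppose for some index j and some l ≤ (k+1)/2 one has ∂P/∂x_j(α) ≢ 0 (mod p^l). Then for every m ≥ 0, the congruence P(x) ≡ 0 (mod p^{k+m}) has at least p^{m(d-1)} solutions β modulo p^{k+m} satisfying β_j ≡ α_j (mod p^{k-l+1}) and β_i ≡ α_i (mod p^k) for all i ≠ j. -/
open MvPolynomial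

lemma eval_sub_dvd {d : ℕ} (P : MvPolynomial (Fin d) ℤ) (n : ℤ) (a b : Fin d → ℤ)
    (h : ∀ i, n ∣ (a i - b i)) : n ∣ (eval a P - eval b P) := by
  induction P using MvPolynomial.induction_on with
  | C c => simp
  | add q r hq hr =>
    have : eval a (q + r) - eval b (q + r) = (eval a q - eval b q) + (eval a r - eval b r) := by
      simp; ring
    rw [this]; exact dvd_add hq hr
  | mul_X q i hq =>
    have : eval a (q * X i) - eval b (q * X i) =
        (eval a q - eval b q) * a i + eval b q * (a i - b i) := by
      simp; ring
    rw [this]; exact dvd_add (hq.mul_right _) ((h i).mul_left _)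

lemma taylor2 {d : ℕ} (P : MvPolynomial (Fin d) ℤ) (j : Fin d) (b : Fin d → ℤ) (x h : ℤ) :
    ∃ r : ℤ, eval (Function.update b j (x + h)) P =
      eval (Function.update b j x) P + h * eval (Function.update b j x) (pderiv j P) + h^2 * r := by
  induction P using MvPolynomial.induction_on with
  | C c => exact ⟨0, by simp⟩
  | add q r hq hr =>
    obtain ⟨s, hs⟩ := hq; obtain ⟨u, hu⟩ := hr
    exact ⟨s + u, by simp [hs, hu]; ring⟩
  | mul_X q i hq =>
    obtain ⟨s, hs⟩ := hq
    by_cases hij : i = j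
    · subst hij
      refine ⟨eval (Function.update b i x) (pderiv i q) + s * x + s * h, ?_⟩
      simp [pderiv_mul, hs]
      ring
    · refine ⟨s * b i, ?_⟩
      simp [pderiv_mul, hs, Function.update_of_ne hij, Pi.single_eq_of_ne hij]
      ring

lemma hensel_step {d : ℕ} (p : ℕ) (hp : p.Prime) (P : MvPolynomial (Fin d) ℤ)
    (j : Fin d) (t K : ℕ) (hK : 2*t + 1 ≤ K) (b : Fin d → ℤ)
    (hb : (p:ℤ)^K ∣ eval b P)
    (hd1 : (p:ℤ)^t ∣ eval b (pderiv j P))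
    (hd2 : ¬ (p:ℤ)^(t+1) ∣ eval b (pderiv j P)) :
    ∃ c : ℤ, (p:ℤ)^(K+1) ∣ eval (Function.update b j (b j + (p:ℤ)^(K-t) * c)) P := by
  haveI : Fact p.Prime := ⟨hp⟩
  obtain ⟨u, hu⟩ := hd1
  obtain ⟨v, hv⟩ := hb
  have hpu : ¬ (p:ℤ) ∣ u := by
    intro ⟨w, hw⟩
    exact hd2 ⟨w, by rw [hu, hw]; ring⟩
  have hu0 : (u : ZMod p) ≠ 0 := by
    rwa [Ne, ZMod.intCast_zmod_eq_zero_iff_dvd]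
  set c : ℤ := ((((-v : ZMod p)) * (u : ZMod p)⁻¹).val : ℤ) with hc
  have hpc : (p:ℤ) ∣ v + u * c := by
    rw [← ZMod.intCast_zmod_eq_zero_iff_dvd]
    push_cast [hc]
    rw [ZMod.natCast_val, ZMod.cast_id]
    field_simp
    ring
  refine ⟨c, ?_⟩
  obtain ⟨r, hr⟩ := taylor2 P j b (b j) ((p:ℤ)^(K-t) * c)
  rw [Function.update_eq_self] at hr
  rw [hr, hv, hu]
  obtain ⟨w, hw⟩ := hpc
  have e1 : K - t + t = K := by omega
  have e2 : K + 1 ≤ 2 * (K - t) := by omega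
  have : (p:ℤ)^K * v + (p:ℤ)^(K-t) * c * ((p:ℤ)^t * u) + ((p:ℤ)^(K-t) * c)^2 * r
      = (p:ℤ)^K * ((p:ℤ) * w) + ((p:ℤ)^(K-t))^2 * (c^2 * r) := by
    have : (p:ℤ)^(K-t) * (p:ℤ)^t = (p:ℤ)^K := by rw [← pow_add, e1]
    linear_combination ((p:ℤ)^K) * hw + (c*u) * this
  rw [this]
  refine dvd_add ⟨w, by ring⟩ ?_
  refine Dvd.dvd.mul_right ?_ _
  rw [← pow_mul]
  exact pow_dvd_pow _ (by omega)

lemma hensel_iter {d : ℕ} (p : ℕ) (hp : p.Prime) (P : MvPolynomial (Fin d) ℤ)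
    (j : Fin d) (t k : ℕ) (hk : 2*t + 1 ≤ k) (b : Fin d → ℤ)
    (hb : (p:ℤ)^k ∣ eval b P)
    (hd1 : (p:ℤ)^t ∣ eval b (pderiv j P))
    (hd2 : ¬ (p:ℤ)^(t+1) ∣ eval b (pderiv j P)) :
    ∀ n : ℕ, ∃ b' : Fin d → ℤ, (p:ℤ)^(k+n) ∣ eval b' P ∧
      (p:ℤ)^(k-t) ∣ (b' j - b j) ∧ ∀ i, i ≠ j → b' i = b i := by
  intro n
  induction n with
  | zero => exact ⟨b, by simpa using hb, by simp, fun i _ => rfl⟩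
  | succ n ih =>
    obtain ⟨b', hb', hbj, hbi⟩ := ih
    have hcong : ∀ i, (p:ℤ)^(t+1) ∣ (b' i - b i) := by
      intro i
      by_cases hij : i = j
      · subst hij
        exact (pow_dvd_pow (p:ℤ) (by omega)).trans hbj
      · simp [hbi i hij]
    have hDcong := eval_sub_dvd (pderiv j P) ((p:ℤ)^(t+1)) b' b hcong
    have hd1' : (p:ℤ)^t ∣ eval b' (pderiv j P) := by
      have : eval b' (pderiv j P) = (eval b' (pderiv j P) - eval b (pderiv j P)) + eval b (pderiv j P) := by ring
      rw [this]
      exact dvd_add ((pow_dvd_pow (p:ℤ) (by omega)).trans hDcong) hd1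
    have hd2' : ¬ (p:ℤ)^(t+1) ∣ eval b' (pderiv j P) := by
      intro hcon
      apply hd2
      have : eval b (pderiv j P) = eval b' (pderiv j P) - (eval b' (pderiv j P) - eval b (pderiv j P)) := by ring
      rw [this]
      exact dvd_sub hcon hDcong
    obtain ⟨c, hc⟩ := hensel_step p hp P j t (k+n) (by omega) b' hb' hd1' hd2'
    refine ⟨Function.update b' j (b' j + (p:ℤ)^(k+n-t) * c), ?_, ?_, ?_⟩
    · have : k + (n+1) = (k + n) + 1 := by omega
      rw [this]; exact hc
    · rw [Function.update_self]
      have : b' j + (p:ℤ)^(k+n-t) * c - b j = (b' j - b j) + (p:ℤ)^(k+n-t) * c := by ring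
      rw [this]
      exact dvd_add hbj ((pow_dvd_pow (p:ℤ) (by omega)).mul_right _)
    · intro i hij
      rw [Function.update_of_ne hij]
      exact hbi i hij


/-- Multivariable Hensel lifting. -/
theorem multivariable_hensel (p : ℕ) (hp : p.Prime) (d : ℕ) (hd : 1 ≤ d)
    (P : MvPolynomial (Fin d) ℤ) (α : Fin d → ℤ) (k l : ℕ)
    (hk : 1 ≤ k) (hl : 1 ≤ l) (hlk : l ≤ (k + 1) / 2)
    (hPα : (p : ℤ) ^ k ∣ MvPolynomial.eval α P)
    (j : Fin d)
    (hder : ¬ (p : ℤ) ^ l ∣ MvPolynomial.eval α (MvPolynomial.pderiv j P)) :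
    ∀ m : ℕ, p ^ (m * (d - 1)) ≤
      Nat.card {β : Fin d → ZMod (p ^ (k + m)) //
        ∃ b : Fin d → ℤ, (∀ i, ((b i : ZMod (p ^ (k + m))) = β i)) ∧
          (p : ℤ) ^ (k + m) ∣ MvPolynomial.eval b P ∧
          (p : ℤ) ^ (k - l + 1) ∣ (b j - α j) ∧
          ∀ i, i ≠ j → (p : ℤ) ^ k ∣ (b i - α i)} := by
  intro m
  haveI : NeZero (p ^ m) := ⟨pow_ne_zero _ hp.pos.ne'⟩
  haveI : NeZero (p ^ (k + m)) := ⟨pow_ne_zero _ hp.pos.ne'⟩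
  set D₀ := eval α (pderiv j P) with hD₀
  -- find exact valuation t of D₀
  have hex : ∃ n, ¬ (p:ℤ)^(n+1) ∣ D₀ := by
    refine ⟨l - 1, ?_⟩
    have : l - 1 + 1 = l := by omega
    rw [this]; exact hder
  set t := Nat.find hex with htdef
  have ht2 : ¬ (p:ℤ)^(t+1) ∣ D₀ := Nat.find_spec hex
  have htl : t ≤ l - 1 := by
    apply Nat.find_le
    have : l - 1 + 1 = l := by omega
    rw [this]; exact hder
  have ht1 : (p:ℤ)^t ∣ D₀ := by
    rcases Nat.eq_zero_or_pos t with h0 | hpos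
    · rw [h0]; simp
    · have := Nat.find_min hex (show t - 1 < t by omega)
      have e : t - 1 + 1 = t := by omega
      rw [e] at this
      exact not_not.mp this
  have h2l : 2 * l ≤ k + 1 := by
    have := (Nat.le_div_iff_mul_le (by norm_num : 0 < 2)).mp hlk
    omega
  have hk2 : 2 * t + 1 ≤ k := by omega
  -- base point for each choice of off-coordinates
  set N := p ^ (k + m) with hN
  set b0 : ({i : Fin d // i ≠ j} → ZMod (p^m)) → Fin d → ℤ :=
    fun c i => if h : i = j then α j else α i + (p:ℤ)^k * ((c ⟨i, h⟩).val : ℤ) with hb0def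
  have hb0j : ∀ c, b0 c j = α j := fun c => by simp [hb0def]
  have hcong : ∀ c i, (p:ℤ)^k ∣ b0 c i - α i := by
    intro c i
    by_cases h : i = j
    · subst h; simp [hb0def]
    · simp [hb0def, h]
  have H : ∀ c, ∃ b' : Fin d → ℤ, (p:ℤ)^(k+m) ∣ eval b' P ∧
      (p:ℤ)^(k-t) ∣ (b' j - b0 c j) ∧ ∀ i, i ≠ j → b' i = b0 c i := by
    intro c
    have hcong' : ∀ i, (p:ℤ)^(t+1) ∣ b0 c i - α i :=
      fun i => (pow_dvd_pow (p:ℤ) (by omega)).trans (hcong c i)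
    have hb : (p:ℤ)^k ∣ eval (b0 c) P := by
      have := eval_sub_dvd P ((p:ℤ)^k) (b0 c) α (hcong c)
      have e : eval (b0 c) P = (eval (b0 c) P - eval α P) + eval α P := by ring
      rw [e]; exact dvd_add this hPα
    have hDc := eval_sub_dvd (pderiv j P) ((p:ℤ)^(t+1)) (b0 c) α hcong'
    have hd1' : (p:ℤ)^t ∣ eval (b0 c) (pderiv j P) := by
      have e : eval (b0 c) (pderiv j P) = (eval (b0 c) (pderiv j P) - D₀) + D₀ := by rw [hD₀]; ring
      rw [e]
      exact dvd_add ((pow_dvd_pow (p:ℤ) (by omega)).trans hDc) ht1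
    have hd2' : ¬ (p:ℤ)^(t+1) ∣ eval (b0 c) (pderiv j P) := by
      intro hcon
      apply ht2
      have e : D₀ = eval (b0 c) (pderiv j P) - (eval (b0 c) (pderiv j P) - D₀) := by ring
      rw [e]
      exact dvd_sub hcon hDc
    exact hensel_iter p hp P j t k hk2 (b0 c) hb hd1' hd2' m
  choose bb h1 h2 h3 using H
  set F : ({i : Fin d // i ≠ j} → ZMod (p^m)) →
      {β : Fin d → ZMod N //
        ∃ b : Fin d → ℤ, (∀ i, ((b i : ZMod N) = β i)) ∧
          (p : ℤ) ^ (k + m) ∣ MvPolynomial.eval b P ∧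
          (p : ℤ) ^ (k - l + 1) ∣ (b j - α j) ∧
          ∀ i, i ≠ j → (p : ℤ) ^ k ∣ (b i - α i)} :=
    fun c => ⟨fun i => ((bb c i : ZMod N)), bb c, fun i => rfl, h1 c, by
        have := h2 c
        rw [hb0j c] at this
        exact (pow_dvd_pow (p:ℤ) (by omega : k - l + 1 ≤ k - t)).trans this, by
        intro i hij
        rw [h3 c i hij]
        exact hcong c i⟩ with hF
  have hinj : Function.Injective F := by
    intro c₁ c₂ heq
    funext i
    have hval : ((bb c₁ i.1 : ZMod N)) = ((bb c₂ i.1 : ZMod N)) :=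
      congrFun (congrArg Subtype.val heq) i.1
    rw [h3 c₁ i.1 i.2, h3 c₂ i.1 i.2] at hval
    have e1 : b0 c₁ i.1 = α i.1 + (p:ℤ)^k * ((c₁ i).val : ℤ) := by
      simp [hb0def, i.2]
    have e2 : b0 c₂ i.1 = α i.1 + (p:ℤ)^k * ((c₂ i).val : ℤ) := by
      simp [hb0def, i.2]
    rw [e1, e2] at hval
    have hdvd : ((N:ℕ) : ℤ) ∣ ((p:ℤ)^k * ((c₂ i).val : ℤ) - (p:ℤ)^k * ((c₁ i).val : ℤ)) := by
      have := (ZMod.intCast_eq_intCast_iff _ _ _).mp hval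
      have := this.dvd
      convert this using 1
      ring
    have hNcast : ((N:ℕ) : ℤ) = (p:ℤ)^k * (p:ℤ)^m := by
      rw [hN]; push_cast; rw [pow_add]
    rw [hNcast, ← mul_sub] at hdvd
    have hpk0 : ((p:ℤ)^k) ≠ 0 := pow_ne_zero _ (by exact_mod_cast hp.pos.ne')
    have hdvd2 : (p:ℤ)^m ∣ (((c₂ i).val : ℤ) - ((c₁ i).val : ℤ)) :=
      (mul_dvd_mul_iff_left hpk0).mp hdvd
    have hlt1 : ((c₁ i).val : ℤ) < (p:ℤ)^m := by exact_mod_cast (c₁ i).val_lt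
    have hlt2 : ((c₂ i).val : ℤ) < (p:ℤ)^m := by exact_mod_cast (c₂ i).val_lt
    have h0 : (((c₂ i).val : ℤ) - ((c₁ i).val : ℤ)) = 0 := by
      refine Int.eq_zero_of_abs_lt_dvd hdvd2 ?_
      have hn1 : (0:ℤ) ≤ ((c₁ i).val : ℤ) := Int.natCast_nonneg _
      have hn2 : (0:ℤ) ≤ ((c₂ i).val : ℤ) := Int.natCast_nonneg _
      rw [abs_lt]
      constructor <;> linarith
    have : (c₂ i).val = (c₁ i).val := by omega
    exact (ZMod.val_injective _ this).symm
  calc p ^ (m * (d - 1))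
      = Nat.card ({i : Fin d // i ≠ j} → ZMod (p^m)) := by
        rw [Nat.card_eq_fintype_card, Fintype.card_fun, ZMod.card]
        have : Fintype.card {i : Fin d // i ≠ j} = d - 1 := by
          rw [Fintype.card_subtype_compl, Fintype.card_subtype_eq, Fintype.card_fin]
        rw [this, ← pow_mul, mul_comm]
    _ ≤ _ := Nat.card_le_card_of_injective F hinj
end

section
/- Let c be a positive integer and write c = q·r with r a power of 2 (r ∣ 2^∞) and q odd, (q, r) = 1. Then for integers m, n and a Dirichlet character χ mod c = χ_r χ_q (factored by CRT), the twisted Kloosterman-type sum K(m,n;c) := Σ_{d mod c, (d,c)=1} ε_d^{−k} χ(d) (c/d) e((md + n·d̄)/c) factors as K(m,n;c) = K'(n q̄, n q̄; r) · S(n r̄, n r̄; q), where S(a,b;q) = Σ_{d mod q, (d,q)=1} χ_q(d)(d/q) e((ad + b d̄)/q) and K' is the corresponding sum of modulus r. -/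
/-!
By the Chinese remainder theorem `d ↦ (d mod q, d mod r)` is an isomorphism of unit groups, and
the summand of `K(n, n; qr)` at `d` is the product of the summands at the two components: the
character factors by hypothesis; `e(A/qr) = e(A q̄/r) e(A r̄/q)` because `q q̄ + r r̄ ≡ 1 (mod qr)`;
and `(qr/d) = (q/d)(r/d) = ε_d^(q-1) (d/q)(r/d)` by quadratic reciprocity, where `ε_d` and `(r/d)`
depend only on `d mod r` since `4 ∣ r`. The factor `ε_d^(q-1)` shifts the weight `k` to `k - q + 1`.
-/

/-- `ε_d`: 1 if `d ≡ 1 (mod 4)` and `i` otherwise (for odd `d` this is the usual `ε_d`). -/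
noncomputable def epsFactor (d : ℕ) : ℂ := if d % 4 = 1 then 1 else Complex.I

/-- `e(a/c)` for a residue class `a` modulo `c`. -/
noncomputable def modE (c : ℕ) [NeZero c] (a : ZMod c) : ℂ :=
  Complex.exp (2 * Real.pi * Complex.I * ((a.val : ℝ) / (c : ℝ)))

/-- The twisted Kloosterman-type sum
`K(m,n;c) = Σ_{d mod c, (d,c)=1} ε_d^{−k} χ(d) (c/d) e((m d + n d̄)/c)`,
where `(c/d)` is the (extended) Kronecker symbol. -/
noncomputable def kloostermanK (k : ℤ) (c : ℕ) [NeZero c] (χ : DirichletCharacter ℂ c)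
    (m n : ZMod c) : ℂ :=
  ∑ d : (ZMod c)ˣ, epsFactor ((d : ZMod c)).val ^ (-k) * χ (d : ZMod c) *
    (jacobiSym (c : ℤ) ((d : ZMod c)).val : ℂ) * modE c (m * (d : ZMod c) + n * ((d⁻¹ : (ZMod c)ˣ) : ZMod c))

/-- The twisted Salié sum `S(a,b;q) = Σ_{d mod q, (d,q)=1} χ_q(d) (d/q) e((a d + b d̄)/q)`. -/
noncomputable def salieS (q : ℕ) [NeZero q] (χ : DirichletCharacter ℂ q) (a b : ZMod q) : ℂ :=
  ∑ d : (ZMod q)ˣ, χ (d : ZMod q) * (jacobiSym (((d : ZMod q)).val : ℤ) q : ℂ) *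
    modE q (a * (d : ZMod q) + b * ((d⁻¹ : (ZMod q)ˣ) : ZMod q))


open ZMod

lemma modE_eq_stdAddChar (c : ℕ) [NeZero c] (a : ZMod c) : modE c a = stdAddChar a := by
  rw [modE, stdAddChar_apply, toCircle_apply]
  push_cast
  ring_nf

lemma stdAddChar_intCast_eq_mul_of_coprime {m n : ℕ} [NeZero m] [NeZero n] (h : m.Coprime n)
    (A : ℤ) :
    stdAddChar (A : ZMod (m * n)) =
      stdAddChar ((A : ZMod m) * (n : ZMod m)⁻¹) * stdAddChar ((A : ZMod n) * (m : ZMod n)⁻¹) := by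
  have hbez : (m : ℤ) * m.gcdA n + n * m.gcdB n = 1 := by
    rw [← Nat.gcd_eq_gcd_ab, h.gcd_eq_one, Nat.cast_one]
  have hn_inv : (n : ZMod m)⁻¹ = (m.gcdB n : ZMod m) := by
    refine ZMod.inv_eq_of_mul_eq_one _ _ _ ?_
    simpa using congrArg (Int.cast : ℤ → ZMod m) hbez
  have hm_inv : (m : ZMod n)⁻¹ = (m.gcdA n : ZMod n) := by
    refine ZMod.inv_eq_of_mul_eq_one _ _ _ ?_
    simpa using congrArg (Int.cast : ℤ → ZMod n) hbez
  have hm : (m : ℂ) ≠ 0 := Nat.cast_ne_zero.mpr (NeZero.ne m)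
  have hn : (n : ℂ) ≠ 0 := Nat.cast_ne_zero.mpr (NeZero.ne n)
  rw [hn_inv, hm_inv, ← Int.cast_mul, ← Int.cast_mul, stdAddChar_coe, stdAddChar_coe,
    stdAddChar_coe, ← Complex.exp_add]
  congr 1
  push_cast
  field_simp
  linear_combination (-A : ℂ) * (by exact_mod_cast hbez : (m : ℂ) * m.gcdA n + n * m.gcdB n = 1)

lemma epsFactor_ne_zero (d : ℕ) : epsFactor d ≠ 0 := by
  unfold epsFactor
  split_ifs <;> simp

lemma epsFactor_mod_of_four_dvd (d : ℕ) {r : ℕ} (hr : 4 ∣ r) :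
    epsFactor (d % r) = epsFactor d := by
  rw [epsFactor, epsFactor, Nat.mod_mod_of_dvd d hr]

lemma epsFactor_sq {d : ℕ} (hd : Odd d) : epsFactor d ^ 2 = (-1) ^ (d / 2) := by
  obtain ⟨j, rfl⟩ := hd
  rcases Nat.even_or_odd j with ⟨i, rfl⟩ | ⟨i, rfl⟩
  · have h : (2 * (i + i) + 1) % 4 = 1 := by omega
    simp [epsFactor, h, show (2 * (i + i) + 1) / 2 = 2 * i by omega, pow_mul]
  · have h : (2 * (2 * i + 1) + 1) % 4 ≠ 1 := by omega
    simp [epsFactor, h, show (2 * (2 * i + 1) + 1) / 2 = 2 * i + 1 by omega, pow_succ, pow_mul]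

lemma quadratic_reciprocity_epsFactor {d q : ℕ} (hd : Odd d) (hq : Odd q) :
    (jacobiSym q d : ℂ) = epsFactor d ^ ((q : ℤ) - 1) * jacobiSym d q := by
  obtain ⟨j, rfl⟩ := hq
  have hexp : ((2 * j + 1 : ℕ) : ℤ) - 1 = ((2 * j : ℕ) : ℤ) := by push_cast; ring
  rw [jacobiSym.quadratic_reciprocity (by simp) hd, hexp, zpow_natCast, pow_mul (epsFactor d),
    epsFactor_sq hd, ← pow_mul, show (2 * j + 1) / 2 = j by omega]
  push_cast
  ring_nf

lemma jacobiSym_four_left {b : ℕ} (hb : Odd b) : jacobiSym 4 b = 1 := by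
  have hcop : (2 : ℤ).gcd b = 1 := by
    rw [show (2 : ℤ) = ((2 : ℕ) : ℤ) from rfl, Int.gcd_natCast_natCast]
    exact Nat.coprime_two_left.mpr hb
  rw [show (4 : ℤ) = 2 ^ 2 by norm_num, jacobiSym.pow_left, jacobiSym.sq_one hcop]

lemma jacobiSym_mod_right_of_four_dvd {a : ℕ} (b : ℕ) (ha : 4 ∣ a) (hb : Odd b) :
    jacobiSym a (b % a) = jacobiSym a b := by
  obtain ⟨a', rfl⟩ := ha
  have hb' : Odd (b % (4 * a')) := by
    rw [Nat.odd_iff, Nat.mod_mod_of_dvd b (dvd_mul_of_dvd_left (by norm_num) a')]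
    exact Nat.odd_iff.mp hb
  push_cast
  rw [jacobiSym.mul_left, jacobiSym.mul_left, jacobiSym_four_left hb', jacobiSym_four_left hb,
    jacobiSym.mod_right' a' hb', jacobiSym.mod_right' a' hb, Nat.mod_mod]

lemma epsFactor_zpow_mul_jacobiSym_mul (k : ℤ) {d q r : ℕ} (hd : Odd d) (hq : Odd q)
    (hr : 4 ∣ r) :
    epsFactor d ^ (-k) * (jacobiSym ((q * r : ℕ) : ℤ) d : ℂ) =
      epsFactor (d % r) ^ (-(k - q + 1)) * jacobiSym r (d % r) * jacobiSym (d % q : ℕ) q := by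
  rw [epsFactor_mod_of_four_dvd d hr, jacobiSym_mod_right_of_four_dvd d hr hd, Nat.cast_mul,
    jacobiSym.mul_left, Int.cast_mul, quadratic_reciprocity_epsFactor hd hq, Int.natCast_mod,
    ← jacobiSym.mod_left, show -(k - q + 1) = -k + (q - 1) by ring,
    zpow_add₀ (epsFactor_ne_zero d)]
  ring

def unitsChineseRemainder {m n : ℕ} (h : m.Coprime n) :
    (ZMod (m * n))ˣ ≃* (ZMod m)ˣ × (ZMod n)ˣ :=
  (Units.mapEquiv (chineseRemainder h).toMulEquiv).trans MulEquiv.prodUnits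

section unitsChineseRemainder

variable {m n : ℕ} [NeZero (m * n)] (h : m.Coprime n) (u : (ZMod (m * n))ˣ)

lemma coe_unitsChineseRemainder_fst :
    ((unitsChineseRemainder h u).1 : ZMod m) = ((u : ZMod (m * n)).val : ZMod m) := by
  change (castHom (Nat.lcm_dvd_mul m n) (ZMod m × ZMod n) (u : ZMod (m * n))).1 = _
  rw [castHom_apply, Prod.fst_zmod_cast, natCast_val]

lemma coe_unitsChineseRemainder_snd :
    ((unitsChineseRemainder h u).2 : ZMod n) = ((u : ZMod (m * n)).val : ZMod n) := by
  change (castHom (Nat.lcm_dvd_mul m n) (ZMod m × ZMod n) (u : ZMod (m * n))).2 = _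
  rw [castHom_apply, Prod.snd_zmod_cast, natCast_val]

end unitsChineseRemainder

theorem kloosterman_factorization_general (k : ℤ) (α q r c : ℕ)
    (hα : 2 ≤ α) (hr : r = 2 ^ α) (hq : Odd q) (hc : c = q * r)
    [NeZero c] [NeZero r] [NeZero q]
    (χ : DirichletCharacter ℂ c) (χr : DirichletCharacter ℂ r) (χq : DirichletCharacter ℂ q)
    (hfact : ∀ d : ℤ, χ (d : ZMod c) = χr (d : ZMod r) * χq (d : ZMod q))
    (n : ℤ) :
    kloostermanK k c χ (n : ZMod c) (n : ZMod c) =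
      kloostermanK (k - q + 1) r χr ((n : ZMod r) * ((q : ZMod r))⁻¹)
          ((n : ZMod r) * ((q : ZMod r))⁻¹) *
        salieS q χq ((n : ZMod q) * ((r : ZMod q))⁻¹) ((n : ZMod q) * ((r : ZMod q))⁻¹) := by
  subst hc
  have hcop : q.Coprime r := hr ▸ (Nat.coprime_two_right.mpr hq).pow_right α
  have h4r : 4 ∣ r := hr ▸ (pow_dvd_pow 2 hα : 2 ^ 2 ∣ 2 ^ α)
  rw [kloostermanK, kloostermanK, salieS, Finset.sum_mul_sum, Finset.sum_comm,
    ← Fintype.sum_prod_type']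
  refine Fintype.sum_equiv (unitsChineseRemainder hcop).toEquiv _ _ fun u => ?_
  simp only [MulEquiv.toEquiv_eq_coe, MulEquiv.coe_toEquiv, ← Prod.fst_inv, ← Prod.snd_inv,
    ← map_inv, coe_unitsChineseRemainder_fst, coe_unitsChineseRemainder_snd, val_natCast]
  set d := (u : ZMod (q * r)).val
  set e := ((u⁻¹ : (ZMod (q * r))ˣ) : ZMod (q * r)).val
  have hd : Odd d := Nat.coprime_two_right.mp <| (val_coe_unit_coprime u).coprime_dvd_right <|
    dvd_mul_of_dvd_right (dvd_trans (by norm_num) h4r) q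
  have hχ : χ u = χr d * χq d := by
    rw [← natCast_zmod_val (u : ZMod (q * r))]
    exact_mod_cast hfact d
  have hexp_arg (N : ℕ) (x : ZMod N) :
      n * x * d + n * x * e = ((n * (d + e) : ℤ) : ZMod N) * x := by
    push_cast; ring
  have hexp_arg_qr : (n : ZMod (q * r)) * u + n * ↑u⁻¹ = ((n * (d + e) : ℤ) : ZMod (q * r)) := by
    rw [← natCast_zmod_val (u : ZMod (q * r)), ← natCast_zmod_val (u⁻¹ : (ZMod (q * r))ˣ).val]
    push_cast; ring
  rw [hχ, hexp_arg_qr, hexp_arg, hexp_arg, modE_eq_stdAddChar, modE_eq_stdAddChar,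
    modE_eq_stdAddChar, stdAddChar_intCast_eq_mul_of_coprime hcop]
  linear_combination (χr d * χq d * stdAddChar (((n * (d + e) : ℤ) : ZMod q) * (r : ZMod q)⁻¹) *
    stdAddChar (((n * (d + e) : ℤ) : ZMod r) * (q : ZMod r)⁻¹)) *
    epsFactor_zpow_mul_jacobiSym_mul k hd hq h4r

theorem kloosterman_factorization (k : ℤ) (hk : Odd k) (α q r c : ℕ)
    (hα : 2 ≤ α) (hr : r = 2 ^ α) (hq : Odd q) (hq0 : 0 < q) (hc : c = q * r)
    [NeZero c] [NeZero r] [NeZero q]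
    (χ : DirichletCharacter ℂ c) (χr : DirichletCharacter ℂ r) (χq : DirichletCharacter ℂ q)
    (hfact : ∀ d : ℤ, χ (d : ZMod c) = χr (d : ZMod r) * χq (d : ZMod q))
    (n : ℤ) :
    kloostermanK k c χ (n : ZMod c) (n : ZMod c) =
      kloostermanK (k - q + 1) r χr ((n : ZMod r) * ((q : ZMod r))⁻¹)
          ((n : ZMod r) * ((q : ZMod r))⁻¹) *
        salieS q χq ((n : ZMod q) * ((r : ZMod q))⁻¹) ((n : ZMod q) * ((r : ZMod q))⁻¹) :=
  kloosterman_factorization_general k α q r c hα hr hq hc χ χr χq hfact n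
end
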